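/- arXiv:2508.04473 — 5 statements merged into one kernel-verified Lean document; each statement's English description precedes it below -/
import Mathlib

section
/- Let G be a finite CIM-group (every cyclic subgroup of G is an intersection of maximal subgroups of G). Then every abelian minimal normal subgroup of G is cyclic (of prime order). -/
/-- `H` is an intersection of maximal subgroups of `G`:
it equals the intersection of all maximal subgroups containing it. -/
def IsIMS {G : Type*} [Group G] (H : Subgroup G) : Prop :=
  H = sInf {M : Subgroup G | IsCoatom M ∧ H ≤ M}

/-- `G` is a CIM-group: every cyclic subgroup is an intersection of maximal subgroups. -/
def IsCIM (G : Type*) [Group G] : Prop :=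
  ∀ g : G, IsIMS (Subgroup.zpowers g)

/-- `M` is a minimal normal subgroup of `G`. -/
def IsMinimalNormal {G : Type*} [Group G] (M : Subgroup G) : Prop :=
  M ≠ ⊥ ∧ M.Normal ∧ ∀ N : Subgroup G, N.Normal → N ≤ M → N ≠ ⊥ → N = M

/-- The Fitting subgroup: the join of all nilpotent normal subgroups
(for a finite group, the largest nilpotent normal subgroup). -/
def fitting (G : Type*) [Group G] : Subgroup G :=
  sSup {N : Subgroup G | N.Normal ∧ Group.IsNilpotent ↥N}

/-- `G` is supersoluble: it has a normal series with cyclic factors. -/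
def IsSupersoluble (G : Type*) [Group G] : Prop :=
  ∃ (n : ℕ) (s : Fin (n + 1) → Subgroup G), Monotone s ∧ s 0 = ⊥ ∧ s (Fin.last n) = ⊤ ∧
    (∀ i, (s i).Normal) ∧
    ∀ i : Fin n, ∃ x : G, s i.succ ≤ s i.castSucc ⊔ Subgroup.zpowers x

theorem abelian_minimal_normal_of_CIM_isCyclic {G : Type*} [Group G] [Finite G]
    (hG : IsCIM G) {M : Subgroup G}
    (hmin : IsMinimalNormal M) (hab : IsMulCommutative ↥M) :
    IsCyclic ↥M ∧ (Nat.card ↥M).Prime := by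
  obtain ⟨hMbot, hMnorm, hminN⟩ := hmin
  -- Key: every nontrivial element of M generates M
  have key : ∀ g ∈ M, g ≠ 1 → M = Subgroup.zpowers g := by
    intro g hgM hg1
    by_contra hne
    have hzle : Subgroup.zpowers g ≤ M := Subgroup.zpowers_le.mpr hgM
    -- there is a maximal subgroup K containing g but not M
    obtain ⟨K, ⟨hKco, hgK⟩, hMK⟩ :
        ∃ K : Subgroup G, (IsCoatom K ∧ Subgroup.zpowers g ≤ K) ∧ ¬ M ≤ K := by
      by_contra h
      push_neg at h
      have : M ≤ sInf {K : Subgroup G | IsCoatom K ∧ Subgroup.zpowers g ≤ K} :=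
        le_sInf fun K hK => h K hK
      rw [← hG g] at this
      exact hne (le_antisymm this hzle)
    -- K ⊔ M = ⊤
    have hsup : K ⊔ M = ⊤ := by
      rcases hKco with ⟨hKne, hKmax⟩
      refine hKmax _ (lt_of_le_of_ne le_sup_left ?_)
      intro h
      exact hMK (le_sup_right.trans h.symm.le)
    -- N := M ⊓ K is normal in G
    set N : Subgroup G := M ⊓ K with hN
    have hKnorm : K ≤ Subgroup.normalizer (N : Set G) := by
      intro k hk
      rw [Subgroup.mem_normalizer_iff]
      intro n
      constructor
      · rintro ⟨hnM, hnK⟩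
        exact ⟨hMnorm.conj_mem n hnM k, K.mul_mem (K.mul_mem hk hnK) (K.inv_mem hk)⟩
      · rintro ⟨hnM, hnK⟩
        have h1 : k⁻¹ * (k * n * k⁻¹) * k⁻¹⁻¹ ∈ M := hMnorm.conj_mem _ hnM k⁻¹
        have h2 : k⁻¹ * (k * n * k⁻¹) * k⁻¹⁻¹ ∈ K :=
          K.mul_mem (K.mul_mem (K.inv_mem hk) hnK) (K.inv_mem (K.inv_mem hk))
        have he : k⁻¹ * (k * n * k⁻¹) * k⁻¹⁻¹ = n := by group
        rw [he] at h1 h2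
        exact ⟨h1, h2⟩
    have hMnormz : M ≤ Subgroup.normalizer (N : Set G) := by
      intro m hm
      rw [Subgroup.mem_normalizer_iff]
      intro n
      have aux : ∀ x, x ∈ M → m * x * m⁻¹ = x := by
        intro x hx
        have := Subgroup.mul_comm_of_mem_isMulCommutative M hm hx
        rw [this, mul_assoc, mul_inv_cancel, mul_one]
      constructor
      · rintro ⟨hnM, hnK⟩
        rw [aux n hnM]; exact ⟨hnM, hnK⟩
      · rintro ⟨hnM, hnK⟩
        have hn : n ∈ M := by
          have := hMnorm.conj_mem _ hnM m⁻¹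
          simpa [mul_assoc] using this
        rw [aux n hn] at hnK
        exact ⟨hn, hnK⟩
    have hNnorm : N.Normal := by
      rw [← Subgroup.normalizer_eq_top_iff]
      exact top_unique (hsup ▸ sup_le hKnorm hMnormz)
    have hNne : N ≠ ⊥ := by
      intro h
      have : g ∈ N := ⟨hgM, hgK (Subgroup.mem_zpowers g)⟩
      rw [h, Subgroup.mem_bot] at this
      exact hg1 this
    have := hminN N hNnorm inf_le_left hNne
    exact hMK (this ▸ inf_le_right : M ≤ K)
  -- get a nontrivial element
  obtain ⟨⟨g, hgM⟩, hg1⟩ := Subgroup.ne_bot_iff_exists_ne_one.mp hMbot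
  have hg1' : g ≠ 1 := by simpa [Subtype.ext_iff] using hg1
  have hMg := key g hgM hg1'
  have hcyc : IsCyclic ↥M := by
    refine ⟨⟨g, hgM⟩, fun x => ?_⟩
    have hx : (x : G) ∈ Subgroup.zpowers g := hMg ▸ x.2
    obtain ⟨k, hk⟩ := hx
    exact ⟨k, by ext; simpa using hk⟩
  refine ⟨hcyc, ?_⟩
  -- prime order
  have hcard1 : Nat.card ↥M ≠ 1 := fun h => hMbot (Subgroup.card_eq_one.mp h)
  set p := (Nat.card ↥M).minFac with hp
  have hpp : p.Prime := Nat.minFac_prime hcard1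
  haveI : Fact p.Prime := ⟨hpp⟩
  obtain ⟨x, hx⟩ := exists_prime_orderOf_dvd_card' (G := ↥M) p (Nat.minFac_dvd _)
  have hx1 : (x : G) ≠ 1 := by
    intro h
    have : x = 1 := Subtype.ext h
    rw [this, orderOf_one] at hx
    exact hpp.one_lt.ne hx
  have hMx := key (x : G) x.2 hx1
  have hgen : ∀ z : ↥M, z ∈ Subgroup.zpowers x := by
    intro z
    have hz : (z : G) ∈ Subgroup.zpowers (x : G) := hMx ▸ z.2
    obtain ⟨k, hk⟩ := hz
    exact ⟨k, by ext; simpa using hk⟩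
  have := orderOf_eq_card_of_forall_mem_zpowers hgen
  rw [hx] at this
  rw [← this]
  exact hpp
end

section
/- Let G be a finite group with trivial Frattini subgroup such that every minimal normal subgroup of G is cyclic of prime order. Then G is supersoluble and metabelian with abelian Fitting quotient G/F(G). -/
open scoped commutatorElement

section Aux

variable {G : Type*} [Group G]

lemma aux_normal_of_commutator_le {H : Subgroup G} (h : commutator G ≤ H) : H.Normal := by
  constructor
  intro n hn g
  have h1 : ⁅g, n⁆ ∈ H :=
    h (Subgroup.commutator_mem_commutator (Subgroup.mem_top g) (Subgroup.mem_top n))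
  have h2 : g * n * g⁻¹ = ⁅g, n⁆ * n := by group
  rw [h2]
  exact H.mul_mem h1 hn

lemma aux_closure_normal {X : Set G}
    (h : ∀ g : G, ∀ x ∈ X, g * x * g⁻¹ ∈ Subgroup.closure X) :
    (Subgroup.closure X).Normal := by
  constructor
  intro n hn g
  have key : Subgroup.closure X ≤
      Subgroup.comap (MulAut.conj g).toMonoidHom (Subgroup.closure X) := by
    rw [Subgroup.closure_le]
    intro x hx
    have : (MulAut.conj g).toMonoidHom x = g * x * g⁻¹ := rfl
    simp only [SetLike.mem_coe, Subgroup.mem_comap, this]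
    exact h g x hx
  have := key hn
  rw [Subgroup.mem_comap] at this
  exact this

lemma aux_mulAut_commute {H : Type*} [Group H] [IsCyclic H] (σ τ : MulAut H) :
    σ * τ = τ * σ := by
  obtain ⟨g, hg⟩ := IsCyclic.exists_generator (α := H)
  obtain ⟨a, ha⟩ := Subgroup.mem_zpowers_iff.1 (hg (σ g))
  obtain ⟨b, hb⟩ := Subgroup.mem_zpowers_iff.1 (hg (τ g))
  have key : ∀ (f : MulAut H) (c : ℤ), g ^ c = f g → ∀ m : ℤ, f (g ^ m) = g ^ (c * m) := by
    intro f c hc m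
    calc f (g ^ m) = (f g) ^ m := map_zpow f g m
      _ = (g ^ c) ^ m := by rw [hc]
      _ = g ^ (c * m) := (zpow_mul g c m).symm
  ext x
  obtain ⟨k, rfl⟩ := Subgroup.mem_zpowers_iff.1 (hg x)
  have h1 : (σ * τ) (g ^ k) = g ^ (a * (b * k)) := by
    rw [MulAut.mul_apply, key τ b hb k, key σ a ha (b * k)]
  have h2 : (τ * σ) (g ^ k) = g ^ (b * (a * k)) := by
    rw [MulAut.mul_apply, key σ a ha k, key τ b hb (a * k)]
  rw [h1, h2]
  ring_nf

end Aux

theorem supersoluble_of_frattini_bot_min_normal_prime {G : Type*} [Group G] [Finite G]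
    (hfr : frattini G = ⊥)
    (hmin : ∀ M : Subgroup G, IsMinimalNormal M → IsCyclic ↥M ∧ (Nat.card ↥M).Prime) :
    IsSupersoluble G ∧ (∀ x y : ↥(commutator G), x * y = y * x) ∧
      ∀ a b : G, ⁅a, b⁆ ∈ fitting G := by
  classical
  set 𝒮 : Set (Subgroup G) := {N | IsMinimalNormal N} with h𝒮def
  set S : Subgroup G := sSup 𝒮 with hSdef
  -- each minimal normal subgroup is the zpowers of some element
  have hgen : ∀ N ∈ 𝒮, ∃ g : G, Subgroup.zpowers g = N := by
    intro N hN
    haveI : IsCyclic ↥N := (hmin N hN).1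
    obtain ⟨g, hg⟩ := IsCyclic.exists_generator (α := ↥N)
    refine ⟨(g : G), le_antisymm (Subgroup.zpowers_le.2 g.2) ?_⟩
    intro x hx
    obtain ⟨k, hk⟩ := Subgroup.mem_zpowers_iff.1 (hg ⟨x, hx⟩)
    refine Subgroup.mem_zpowers_iff.2 ⟨k, ?_⟩
    have := congrArg (fun y : ↥N => (y : G)) hk
    simpa using this
  -- pairwise commutation of elements of minimal normal subgroups
  have hpair : ∀ N ∈ 𝒮, ∀ N' ∈ 𝒮, ∀ n ∈ N, ∀ m ∈ N', n * m = m * n := by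
    intro N hN N' hN' n hn m hm
    by_cases hEq : N = N'
    · subst hEq
      haveI : IsCyclic ↥N := (hmin N hN).1
      letI : CommGroup ↥N := IsCyclic.commGroup
      have := mul_comm (⟨n, hn⟩ : ↥N) (⟨m, hm⟩ : ↥N)
      exact congrArg (fun y : ↥N => (y : G)) this
    · haveI hNn : N.Normal := hN.2.1
      haveI hN'n : N'.Normal := hN'.2.1
      have hbot : N ⊓ N' = ⊥ := by
        by_contra hne
        have h1 := hN.2.2 (N ⊓ N') inferInstance inf_le_left hne
        have h2 := hN'.2.2 (N ⊓ N') inferInstance inf_le_right hne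
        exact hEq (h1 ▸ h2)
      have hc : n * m * n⁻¹ * m⁻¹ ∈ N ⊓ N' := by
        constructor
        · have h1 : m * n⁻¹ * m⁻¹ ∈ N := hNn.conj_mem _ (N.inv_mem hn) m
          have : n * m * n⁻¹ * m⁻¹ = n * (m * n⁻¹ * m⁻¹) := by group
          rw [this]
          exact N.mul_mem hn h1
        · have h1 : n * m * n⁻¹ ∈ N' := hN'n.conj_mem _ hm n
          exact N'.mul_mem h1 (N'.inv_mem hm)
      rw [hbot, Subgroup.mem_bot] at hc
      have : n * m * n⁻¹ * m⁻¹ * (m * n) = 1 * (m * n) := by rw [hc]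
      calc n * m = n * m * n⁻¹ * m⁻¹ * (m * n) := by group
        _ = 1 * (m * n) := this
        _ = m * n := one_mul _
  -- S is abelian
  have hScomm : ∀ x ∈ S, ∀ y ∈ S, x * y = y * x := by
    have step1 : ∀ N ∈ 𝒮, ∀ n ∈ N, ∀ x ∈ S, n * x = x * n := by
      intro N hN n hn
      have hle : S ≤ Subgroup.centralizer {n} := by
        apply sSup_le
        intro N' hN' m hm
        rw [Subgroup.mem_centralizer_iff]
        intro h hh
        rw [Set.mem_singleton_iff] at hh
        rw [hh]
        exact hpair N hN N' hN' n hn m hm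
      intro x hx
      exact Subgroup.mem_centralizer_iff.1 (hle hx) n rfl
    intro x hx y hy
    have hle : S ≤ Subgroup.centralizer {x} := by
      apply sSup_le
      intro N hN m hm
      rw [Subgroup.mem_centralizer_iff]
      intro h hh
      rw [Set.mem_singleton_iff] at hh
      rw [hh]
      exact (step1 N hN m hm x hx).symm
    exact Subgroup.mem_centralizer_iff.1 (hle hy) x rfl
  -- S normal
  have hSnormal : S.Normal := by
    constructor
    intro n hn g
    have key : S ≤ Subgroup.comap (MulAut.conj g).toMonoidHom S := by
      apply sSup_le
      intro N hN x hx
      rw [Subgroup.mem_comap]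
      have h1 : (MulAut.conj g).toMonoidHom x = g * x * g⁻¹ := rfl
      rw [h1]
      exact le_sSup hN (hN.2.1.conj_mem x hx g)
    have := key hn
    rw [Subgroup.mem_comap] at this
    exact this
  -- every nontrivial normal subgroup contains a minimal normal subgroup
  have hexmin : ∀ K : Subgroup G, K.Normal → K ≠ ⊥ → ∃ N ∈ 𝒮, N ≤ K := by
    intro K hK hKbot
    obtain ⟨N, ⟨hN1, hN2, hN3⟩, hminN⟩ :=
      wellFounded_lt.has_min {N : Subgroup G | N ≠ ⊥ ∧ N.Normal ∧ N ≤ K}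
        ⟨K, hKbot, hK, le_rfl⟩
    refine ⟨N, ⟨hN1, hN2, ?_⟩, hN3⟩
    intro N' hn' hle hne
    by_contra hne2
    exact hminN N' ⟨hne, hn', hle.trans hN3⟩ (lt_of_le_of_ne hle hne2)
  -- a minimal supplement H to S
  obtain ⟨H, hHtop, hHmin⟩ :=
    wellFounded_lt.has_min {H : Subgroup G | S ⊔ H = ⊤} ⟨⊤, by simp⟩
  have hdecomp : ∀ (N H' : Subgroup G), N.Normal → ∀ g ∈ N ⊔ H',
      ∃ s ∈ N, ∃ h ∈ H', g = s * h := by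
    intro N H' hN g hg
    haveI := hN
    rw [← SetLike.mem_coe, Subgroup.normal_mul] at hg
    obtain ⟨s, hs, h, hh, rfl⟩ := hg
    exact ⟨s, hs, h, hh, rfl⟩
  -- S ⊓ H is normal
  have hDnormal : (S ⊓ H).Normal := by
    rw [← Subgroup.normalizer_eq_top_iff, eq_top_iff, ← hHtop]
    apply sup_le
    · intro s hs
      rw [Subgroup.mem_normalizer_iff]
      intro x
      simp only [Subgroup.mem_inf]
      constructor
      · intro hx
        have hc := hScomm s hs x hx.1
        have h3 : s * x * s⁻¹ = x := by rw [hc]; group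
        rw [h3]; exact hx
      · intro hx
        have hc := hScomm s hs (s * x * s⁻¹) hx.1
        have h2 : s * x * s⁻¹ * s = s * x := by group
        have h3 : s * x * s⁻¹ = x := mul_left_cancel (hc.trans h2)
        rw [h3] at hx; exact hx

    · intro h hh
      rw [Subgroup.mem_normalizer_iff]
      intro x
      simp only [Subgroup.mem_inf]
      constructor
      · rintro ⟨hx1, hx2⟩
        exact ⟨hSnormal.conj_mem x hx1 h, H.mul_mem (H.mul_mem hh hx2) (H.inv_mem hh)⟩
      · rintro ⟨hx1, hx2⟩
        have h4 : x = h⁻¹ * (h * x * h⁻¹) * h := by group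
        constructor
        · rw [h4]
          have := hSnormal.conj_mem _ hx1 h⁻¹
          simpa using this
        · rw [h4]
          exact H.mul_mem (H.mul_mem (H.inv_mem hh) hx2) hh
  -- Frattini argument : S ⊓ H = ⊥
  have hDbot : S ⊓ H = ⊥ := by
    have hle : S ⊓ H ≤ frattini G := by
      refine le_iInf₂ ?_
      intro M hM
      by_contra hnle
      have htop : (S ⊓ H) ⊔ M = ⊤ := by
        have h1 : M < (S ⊓ H) ⊔ M :=
          lt_of_le_of_ne le_sup_right (fun h => hnle (h ▸ le_sup_left))
        rw [sup_comm]
        exact hM.2 _ (by rw [sup_comm]; exact h1)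
      have hH'lt : H ⊓ M < H := by
        refine lt_of_le_of_ne inf_le_left ?_
        intro h
        exact hnle ((inf_le_inf_left S (h ▸ inf_le_right : H ≤ M)).trans inf_le_right)
      refine hHmin (H ⊓ M) ?_ hH'lt
      rw [Set.mem_setOf_eq, eq_top_iff]
      intro g _
      have hg1 : g ∈ S ⊔ H := by rw [hHtop]; trivial
      obtain ⟨s, hs, h, hh, rfl⟩ := hdecomp S H hSnormal g hg1
      have hh2 : h ∈ (S ⊓ H) ⊔ M := by rw [htop]; trivial
      obtain ⟨d, hd, m, hm, rfl⟩ := hdecomp (S ⊓ H) M hDnormal h hh2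
      have hmH : m ∈ H := by
        have := H.mul_mem (H.inv_mem hd.2) hh
        simpa [mul_assoc] using this
      have h5 : s * (d * m) = (s * d) * m := by group
      rw [h5]
      refine Subgroup.mul_mem _ (Subgroup.mem_sup_left (S.mul_mem hs hd.1)) (Subgroup.mem_sup_right ?_)
      exact Subgroup.mem_inf.2 ⟨hmH, hm⟩
    rw [hfr] at hle
    exact le_bot_iff.1 hle
  -- centralizer of S is contained in S
  have hSC : S ≤ Subgroup.centralizer (S : Set G) := by
    intro x hx
    exact Subgroup.mem_centralizer_iff.2 fun y hy => hScomm y hy x hx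
  have hCS : Subgroup.centralizer (S : Set G) ≤ S := by
    set C := Subgroup.centralizer (S : Set G) with hCdef
    have hKnormal : (C ⊓ H).Normal := by
      rw [← Subgroup.normalizer_eq_top_iff, eq_top_iff, ← hHtop]
      apply sup_le
      · intro s hs
        rw [Subgroup.mem_normalizer_iff]
        intro x
        simp only [Subgroup.mem_inf]
        constructor
        · intro hx
          have hc := Subgroup.mem_centralizer_iff.1 hx.1 s hs
          have h3 : s * x * s⁻¹ = x := by rw [hc]; group
          rw [h3]; exact hx
        · intro hx
          have hc := Subgroup.mem_centralizer_iff.1 hx.1 s hs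
          have h2 : s * x * s⁻¹ * s = s * x := by group
          have h3 : s * x * s⁻¹ = x := mul_left_cancel (hc.trans h2)
          rw [h3] at hx; exact hx
      · intro h hh
        rw [Subgroup.mem_normalizer_iff]
        intro x
        simp only [Subgroup.mem_inf]
        constructor
        · rintro ⟨hx1, hx2⟩
          refine ⟨?_, H.mul_mem (H.mul_mem hh hx2) (H.inv_mem hh)⟩
          rw [Subgroup.mem_centralizer_iff]
          intro s hs
          have hs' : h⁻¹ * s * h ∈ S := by
            have := hSnormal.conj_mem s hs h⁻¹
            simpa using this
          have hc := Subgroup.mem_centralizer_iff.1 hx1 _ hs'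
          have h6 : s * (h * x * h⁻¹) = h * (h⁻¹ * s * h * x) * h⁻¹ := by group
          rw [h6, hc]
          group
        · rintro ⟨hx1, hx2⟩
          have hx2' : x ∈ H := by
            have h4 : x = h⁻¹ * (h * x * h⁻¹) * h := by group
            rw [h4]
            exact H.mul_mem (H.mul_mem (H.inv_mem hh) hx2) hh
          refine ⟨?_, hx2'⟩
          rw [Subgroup.mem_centralizer_iff]
          intro s hs
          have hs' : h * s * h⁻¹ ∈ S := hSnormal.conj_mem s hs h
          have hc := Subgroup.mem_centralizer_iff.1 hx1 _ hs'
          have h6 : s * x = h⁻¹ * (h * s * h⁻¹ * (h * x * h⁻¹)) * h := by group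
          rw [h6, hc]
          group
    have hKbot : C ⊓ H = ⊥ := by
      by_contra hne
      obtain ⟨N, hN, hNle⟩ := hexmin (C ⊓ H) hKnormal hne
      have h2 : N ≤ S ⊓ H := le_inf (le_sSup hN) (hNle.trans inf_le_right)
      rw [hDbot] at h2
      exact hN.1 (le_bot_iff.1 h2)
    intro c hc
    have hc1 : c ∈ S ⊔ H := by rw [hHtop]; trivial
    obtain ⟨s, hs, h, hh, rfl⟩ := hdecomp S H hSnormal _ hc1
    have hhC : h ∈ C := by
      have := C.mul_mem (C.inv_mem (hSC hs)) hc
      simpa [mul_assoc] using this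
    have : h ∈ C ⊓ H := ⟨hhC, hh⟩
    rw [hKbot, Subgroup.mem_bot] at this
    subst this
    simpa using hs
  -- every commutator lies in S
  have hcommS : ∀ a b : G, ⁅a, b⁆ ∈ S := by
    intro a b
    apply hCS
    rw [Subgroup.mem_centralizer_iff]
    have hle : S ≤ Subgroup.centralizer {⁅a, b⁆} := by
      apply sSup_le
      intro N hN n hn
      haveI hNn : N.Normal := hN.2.1
      haveI : IsCyclic ↥N := (hmin N hN).1
      rw [Subgroup.mem_centralizer_iff]
      intro c hc
      rw [Set.mem_singleton_iff] at hc
      subst hc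
      have hφ : MulAut.conjNormal (H := N) ⁅a, b⁆ = 1 := by
        rw [map_commutatorElement]
        exact commutatorElement_eq_one_iff_commute.2
          (aux_mulAut_commute (MulAut.conjNormal (H := N) a) (MulAut.conjNormal (H := N) b))
      have h1 : ((MulAut.conjNormal (H := N) ⁅a, b⁆) ⟨n, hn⟩ : G) = n := by
        rw [hφ]; rfl
      rw [MulAut.conjNormal_apply] at h1
      calc ⁅a, b⁆ * n = (⁅a, b⁆ * n * ⁅a, b⁆⁻¹) * ⁅a, b⁆ := by group
        _ = n * ⁅a, b⁆ := by rw [h1]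
    intro s hs
    exact (Subgroup.mem_centralizer_iff.1 (hle hs) ⁅a, b⁆ rfl).symm
  have hcommle : commutator G ≤ S := by
    rw [commutator_def, Subgroup.commutator_le]
    exact fun a _ b _ => hcommS a b
  -- S is contained in the Fitting subgroup
  have hSfit : S ≤ fitting G := by
    apply sSup_le
    intro N hN
    apply le_sSup
    refine ⟨hN.2.1, ?_⟩
    haveI : IsCyclic ↥N := (hmin N hN).1
    letI : CommGroup ↥N := IsCyclic.commGroup
    infer_instance
  refine ⟨?_, ?_, ?_⟩
  · -- supersolubility
    have h𝒮fin : 𝒮.Finite := Set.toFinite 𝒮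
    set l𝒮 : List (Subgroup G) := h𝒮fin.toFinset.toList with hl𝒮def
    have hl𝒮mem : ∀ N : Subgroup G, N ∈ l𝒮 ↔ N ∈ 𝒮 := by
      intro N
      rw [hl𝒮def, Finset.mem_toList, Set.Finite.mem_toFinset]
    set g0 : Subgroup G → G :=
      fun N => if h : ∃ g : G, Subgroup.zpowers g = N then h.choose else 1 with hg0def
    have hg0 : ∀ N ∈ 𝒮, Subgroup.zpowers (g0 N) = N := by
      intro N hN
      rw [hg0def]
      simp only
      rw [dif_pos (hgen N hN)]
      exact (hgen N hN).choose_spec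
    letI : Fintype G := Fintype.ofFinite G
    set A : List G := l𝒮.map g0 with hAdef
    set B : List G := Finset.univ.toList (α := G) with hBdef
    set L : List G := A ++ B with hLdef
    have hALlen : A.length ≤ L.length := by
      rw [hLdef, List.length_append]
      exact Nat.le_add_right _ _
    set X : Fin (L.length + 1) → Set G :=
      fun i => {x | ∃ k : Fin L.length, (k : ℕ) < (i : ℕ) ∧ L.get k = x} with hXdef
    -- S is inside the closure of X i whenever A.length ≤ i
    have hSle : ∀ i : Fin (L.length + 1), A.length ≤ (i : ℕ) →
        S ≤ Subgroup.closure (X i) := by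
      intro i hi
      apply sSup_le
      intro N hN
      rw [← hg0 N hN, Subgroup.zpowers_le]
      apply Subgroup.subset_closure
      have hmemA : g0 N ∈ A := List.mem_map.2 ⟨N, (hl𝒮mem N).2 hN, rfl⟩
      obtain ⟨j, hj⟩ := List.mem_iff_get.1 hmemA
      refine ⟨⟨(j : ℕ), lt_of_lt_of_le j.2 hALlen⟩, lt_of_lt_of_le j.2 hi, ?_⟩
      show (A ++ B)[(j : ℕ)]'(lt_of_lt_of_le j.2 hALlen) = g0 N
      rw [List.getElem_append_left j.2]
      exact hj
    refine ⟨L.length, fun i => Subgroup.closure (X i), ?_, ?_, ?_, ?_, ?_⟩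
    · intro i j hij
      apply Subgroup.closure_mono
      rintro x ⟨k, hk, rfl⟩
      exact ⟨k, lt_of_lt_of_le hk (Fin.le_def.1 hij), rfl⟩
    · rw [eq_bot_iff, ← Subgroup.closure_empty]
      apply Subgroup.closure_mono
      rintro x ⟨k, hk, rfl⟩
      exact absurd hk (by simp)
    · rw [eq_top_iff]
      intro g _
      apply Subgroup.subset_closure
      have hgL : g ∈ L := by
        rw [hLdef]
        exact List.mem_append.2 (Or.inr (by rw [hBdef, Finset.mem_toList]; exact Finset.mem_univ g))
      obtain ⟨k, hk⟩ := List.mem_iff_get.1 hgL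
      exact ⟨k, by simp [Fin.last], hk⟩
    · intro i
      rcases le_or_gt (i : ℕ) A.length with hcase | hcase
      · -- a join of minimal normal subgroups
        apply aux_closure_normal
        rintro g x ⟨k, hk, rfl⟩
        have hkA : (k : ℕ) < A.length := lt_of_lt_of_le hk hcase
        have hgetA : L.get k = A[(k : ℕ)] := by
          show (A ++ B)[(k : ℕ)]'(k.2) = A[(k : ℕ)]
          exact List.getElem_append_left hkA
        have hkl𝒮 : (k : ℕ) < l𝒮.length := by
          rw [hAdef, List.length_map] at hkA
          exact hkA
        have hgetA2 : A[(k : ℕ)]'hkA = g0 (l𝒮[(k : ℕ)]'hkl𝒮) := by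
          show (l𝒮.map g0)[(k : ℕ)]'(by simpa using hkl𝒮) = _
          exact List.getElem_map g0
        set N : Subgroup G := l𝒮[(k : ℕ)]'hkl𝒮 with hNdef
        have hN𝒮 : N ∈ 𝒮 := (hl𝒮mem N).1 (List.getElem_mem hkl𝒮)
        have hzp : Subgroup.zpowers (L.get k) = N := by
          rw [hgetA, hgetA2]
          exact hg0 N hN𝒮
        have hxN : L.get k ∈ N := by
          rw [← hzp]
          exact Subgroup.mem_zpowers _
        have hconj : g * L.get k * g⁻¹ ∈ N := (hN𝒮).2.1.conj_mem _ hxN g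
        have hzple : N ≤ Subgroup.closure (X i) := by
          rw [← hzp, Subgroup.zpowers_le]
          exact Subgroup.subset_closure ⟨k, hk, rfl⟩
        exact hzple hconj
      · exact aux_normal_of_commutator_le (hcommle.trans (hSle _ (le_of_lt hcase)))
    · intro i
      refine ⟨L.get i, ?_⟩
      rw [Subgroup.closure_le]
      rintro x ⟨k, hk, rfl⟩
      rw [Fin.val_succ] at hk
      rcases lt_or_eq_of_le (Nat.lt_succ_iff.1 hk) with hlt | heq
      · apply SetLike.le_def.1 le_sup_left
        apply Subgroup.subset_closure
        exact ⟨k, by rw [Fin.coe_castSucc]; exact hlt, rfl⟩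
      · apply SetLike.le_def.1 le_sup_right
        have : k = i := Fin.ext heq
        subst this
        exact Subgroup.mem_zpowers _
  · -- commutator is abelian
    intro x y
    have hx : (x : G) ∈ S := hcommle x.2
    have hy : (y : G) ∈ S := hcommle y.2
    exact Subtype.ext (hScomm x hx y hy)
  · -- commutators in the Fitting subgroup
    intro a b
    exact hSfit (hcommS a b)
end

section
/- Every normal subgroup of a finite CIM-group is a CIM-group. -/
/-- Local lemma: if `N` is normal in `G`, `M` is a maximal subgroup of `G`, and `x ∈ N \ M`,
then there is a maximal subgroup of `N` containing `M ∩ N` and missing `x`. -/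
theorem local_max_lemma {G : Type*} [Group G] [Finite G] (N M : Subgroup G)
    (hN : N.Normal) (hM : IsCoatom M) (x : G) (hxN : x ∈ N) (hxM : x ∉ M) :
    ∃ K : Subgroup ↥N, IsCoatom K ∧ M.subgroupOf N ≤ K ∧ (⟨x, hxN⟩ : ↥N) ∉ K := by
  haveI := hN
  by_contra hcon
  push_neg at hcon
  set D : Subgroup ↥N := M.subgroupOf N with hD
  set S : Set (Subgroup ↥N) := {K : Subgroup ↥N | IsCoatom K ∧ D ≤ K} with hS
  set T : Subgroup ↥N := sInf S with hT
  set xx : ↥N := ⟨x, hxN⟩ with hxx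
  -- D ≠ ⊤
  have hDne : D ≠ ⊤ := by
    intro hDt
    apply hxM
    have : xx ∈ D := hDt ▸ Subgroup.mem_top xx
    exact (Subgroup.mem_subgroupOf).mp this
  -- S is nonempty
  obtain ⟨K₀, hK₀, hDK₀⟩ : ∃ K₀, IsCoatom K₀ ∧ D ≤ K₀ := by
    rcases eq_top_or_exists_le_coatom D with h | ⟨K₀, h1, h2⟩
    · exact absurd h hDne
    · exact ⟨K₀, h1, h2⟩
  -- x ∈ T
  have hxT : xx ∈ T := by
    rw [hT, Subgroup.mem_sInf]
    intro K hK
    exact hcon K hK.1 hK.2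
  -- conjugation invariance of S
  have hSconj : ∀ m : G, m ∈ M → ∀ K ∈ S,
      Subgroup.map (MulAut.conjNormal (H := N) m : ↥N ≃* ↥N).toMonoidHom K ∈ S := by
    intro m hm K hK
    constructor
    · have := ((MulAut.conjNormal (H := N) m : ↥N ≃* ↥N).mapSubgroup).isCoatom_iff K
      exact this.mpr hK.1
    · intro d hd
      have hd' : (MulAut.conjNormal (H := N) m : ↥N ≃* ↥N).symm d ∈ D := by
        rw [Subgroup.mem_subgroupOf]
        have : ((MulAut.conjNormal (H := N) m : ↥N ≃* ↥N).symm d : G) = m⁻¹ * (d : G) * m :=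
          MulAut.conjNormal_symm_apply m d
        rw [this]
        have hdM : (d : G) ∈ M := (Subgroup.mem_subgroupOf).mp hd
        exact M.mul_mem (M.mul_mem (M.inv_mem hm) hdM) hm
      refine ⟨(MulAut.conjNormal (H := N) m : ↥N ≃* ↥N).symm d, hK.2 hd', ?_⟩
      simp
  -- T is invariant under conjugation by elements of M
  have hTconj : ∀ m : G, m ∈ M → ∀ t : ↥N, t ∈ T → (MulAut.conjNormal (H := N) m) t ∈ T := by
    intro m hm t ht
    rw [hT, Subgroup.mem_sInf]
    intro K hK
    have hK' := hSconj m⁻¹ (M.inv_mem hm) K hK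
    have ht' : t ∈ Subgroup.map (MulAut.conjNormal (H := N) m⁻¹ : ↥N ≃* ↥N).toMonoidHom K := by
      rw [hT, Subgroup.mem_sInf] at ht
      exact ht _ hK'
    obtain ⟨u, hu, hut⟩ := ht'
    have h1 : (t : G) = m⁻¹ * (u : G) * m := by
      have h2 := congrArg (fun z : ↥N => (z : G)) hut
      simp only [MulEquiv.coe_toMonoidHom] at h2
      rw [← h2, MulAut.conjNormal_apply, inv_inv]
    have heq : (MulAut.conjNormal (H := N) m) t = u := by
      apply Subtype.ext
      have h3 : ((MulAut.conjNormal (H := N) m) t : G) = m * (t : G) * m⁻¹ :=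
        MulAut.conjNormal_apply m t
      rw [h3, h1]; group
    rw [heq]
    exact hu
  -- T' := image of T in G
  set T' : Subgroup G := T.map N.subtype with hT'
  have hxT' : x ∈ T' := ⟨xx, hxT, rfl⟩
  have hT'N : T' ≤ N := by
    rintro t ⟨τ, hτ, rfl⟩; exact τ.2
  -- M ⊔ T' = ⊤
  have hsup : M ⊔ T' = ⊤ := by
    apply hM.2
    rcases lt_or_eq_of_le (le_sup_left : M ≤ M ⊔ T') with h | h
    · exact h
    · exact absurd (h ▸ (le_sup_right : T' ≤ M ⊔ T') hxT') hxM
  -- T' is normal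
  have hMnorm : M ≤ Subgroup.normalizer (T' : Set G) := by
    intro m hm
    rw [Subgroup.mem_normalizer_iff]
    intro t
    constructor
    · rintro ⟨τ, hτ, rfl⟩
      exact ⟨(MulAut.conjNormal (H := N) m) τ, hTconj m hm τ hτ,
        (MulAut.conjNormal_apply m τ).symm⟩
    · rintro ⟨τ, hτ, hτt⟩
      have h1 : ((MulAut.conjNormal (H := N) m⁻¹) τ : G) = m⁻¹ * (τ : G) * m := by
        rw [MulAut.conjNormal_apply]; group
      have hτt' : (τ : G) = m * t * m⁻¹ := hτt
      have h2 : t = ((MulAut.conjNormal (H := N) m⁻¹) τ : G) := by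
        rw [h1, hτt']; group
      exact h2 ▸ ⟨_, hTconj m⁻¹ (M.inv_mem hm) τ hτ, rfl⟩
  have hT'norm : T'.Normal := by
    rw [← Subgroup.normalizer_eq_top_iff]
    apply top_le_iff.mp
    rw [← hsup]
    exact sup_le hMnorm Subgroup.le_normalizer
  haveI := hT'norm
  -- N ≤ (M ⊓ N) ⊔ T'
  have hNle : N ≤ (M ⊓ N) ⊔ T' := by
    intro n hn
    have hn' : n ∈ M ⊔ T' := hsup ▸ Subgroup.mem_top n
    rw [← SetLike.mem_coe, Subgroup.mul_normal M T'] at hn'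
    obtain ⟨m, hm, t, ht, rfl⟩ := hn'
    have htN : t ∈ N := hT'N ht
    have hmN : m ∈ N := by
      have : m = m * t * t⁻¹ := by group
      rw [this]
      exact N.mul_mem hn (N.inv_mem htN)
    exact Subgroup.mul_mem _ (Subgroup.mem_sup_left ⟨hm, hmN⟩) (Subgroup.mem_sup_right ht)
  -- contradiction via K₀
  have hK₀top : K₀ = ⊤ := by
    rw [eq_top_iff]
    intro ν _
    have hν : (ν : G) ∈ (M ⊓ N) ⊔ T' := hNle ν.2
    -- (M ⊓ N) ⊔ T' ≤ K₀.map N.subtype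
    have hle : (M ⊓ N) ⊔ T' ≤ K₀.map N.subtype := by
      apply sup_le
      · rintro d ⟨hdM, hdN⟩
        exact ⟨⟨d, hdN⟩, hDK₀ ((Subgroup.mem_subgroupOf).mpr hdM), rfl⟩
      · rintro t ⟨τ, hτ, rfl⟩
        exact ⟨τ, (sInf_le ⟨hK₀, hDK₀⟩ : T ≤ K₀) hτ, rfl⟩
    obtain ⟨κ, hκ, hκν⟩ := hle hν
    have : κ = ν := Subtype.ext hκν
    exact this ▸ hκ
  exact hK₀.1 hK₀top
theorem normal_subgroup_of_isCIM_isCIM {G : Type*} [Group G] [Finite G]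
    (h : IsCIM G) (N : Subgroup G) (hN : N.Normal) : IsCIM ↥N := by
  intro g
  unfold IsIMS
  apply le_antisymm
  · exact le_sInf fun K hK => hK.2
  · intro x hx
    by_contra hxg
    have hgx : (x : G) ∉ Subgroup.zpowers (g : G) := by
      intro hmem
      obtain ⟨k, hk⟩ := Subgroup.mem_zpowers_iff.mp hmem
      refine hxg (Subgroup.mem_zpowers_iff.mpr ⟨k, Subtype.ext ?_⟩)
      simpa using hk
    have hCIM := h (g : G)
    unfold IsIMS at hCIM
    have hgx' : (x : G) ∉ sInf {M : Subgroup G | IsCoatom M ∧ Subgroup.zpowers (g : G) ≤ M} :=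
      hCIM ▸ hgx
    rw [Subgroup.mem_sInf] at hgx'
    push_neg at hgx'
    obtain ⟨M, ⟨hMco, hgM⟩, hxM⟩ := hgx'
    obtain ⟨K, hKco, hMK, hxK⟩ := local_max_lemma N M hN hMco (x : G) x.2 hxM
    have hgK : Subgroup.zpowers g ≤ K := by
      rw [Subgroup.zpowers_le]
      exact hMK (Subgroup.mem_subgroupOf.mpr (hgM (Subgroup.mem_zpowers _)))
    have : x ∈ K := (Subgroup.mem_sInf.mp hx) K ⟨hKco, hgK⟩
    exact hxK (by simpa using this)
end

section
/- For every positive integer n there exists a finite group G with at least n subgroups such that exactly one proper subgroup of G fails to be an intersection of maximal subgroups of G. -/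
/-!
Let `p ≡ 1 [MOD 4]` be prime and `G = 𝔽_p ⋊ μ₄` the group of affine maps `z ↦ u z + b` of `𝔽_p`
with `u⁴ = 1`. A subgroup of `G` either contains the translations `T`, and then it is the preimage
of one of `1 < μ₂ < μ₄`, or it meets `T` trivially; then any two of its elements commute (their
commutator is a translation), so it fixes the unique fixed point of any of its elements `g ≠ 1`
and lies in a point stabilizer `G_a ≅ μ₄`. The maximal subgroups are the stabilizers (the action
has prime degree) and the dihedral subgroup `D = 𝔽_p ⋊ μ₂`. Every subgroup other than `T` is an
intersection of at most two of them (`1 = G_0 ∩ G_1`), but `D` is the only maximal subgroup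
above `T`. The `p` stabilizers are distinct, so `G` has at least `p` subgroups.
-/
open MulAction Subgroup

theorem isIMS_of_isCoatom {G : Type*} [Group G] {K : Subgroup G} (hK : IsCoatom K) : IsIMS K :=
  le_antisymm (le_sInf fun _ hM => hM.2) (sInf_le ⟨hK, le_rfl⟩)

theorem isIMS_inf {G : Type*} [Group G] {M₁ M₂ : Subgroup G} (h₁ : IsCoatom M₁)
    (h₂ : IsCoatom M₂) : IsIMS (M₁ ⊓ M₂) :=
  le_antisymm (le_sInf fun _ hM => hM.2)
    (le_inf (sInf_le ⟨h₁, inf_le_left⟩) (sInf_le ⟨h₂, inf_le_right⟩))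

theorem not_isIMS_of_lt {G : Type*} [Group G] {K H : Subgroup G} (hKH : K < H)
    (hH : ∀ M, IsCoatom M → K ≤ M → H ≤ M) : ¬ IsIMS K := fun hK =>
  hKH.not_ge (hK ▸ le_sInf fun M hM => hH M hM.1 hM.2)

theorem Subgroup.eq_inf_comap_map {G N : Type*} [Group G] [Group N] (f : G →* N)
    {K H : Subgroup G} (hKH : K ≤ H) (hker : H ⊓ f.ker ≤ K) : K = H ⊓ (K.map f).comap f := by
  refine le_antisymm (le_inf hKH (le_comap_map f K)) fun g hg => ?_
  obtain ⟨hgH, hg⟩ := mem_inf.mp hg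
  obtain ⟨k, hk, hfk⟩ := mem_map.mp hg
  have hgk : g * k⁻¹ ∈ K := hker (mem_inf.mpr ⟨mul_mem hgH (inv_mem (hKH hk)), by simp [hfk]⟩)
  simpa using mul_mem hgk hk

section

variable {F : Type*} [Field F]

theorem exists_eq_pow_of_pow_four_eq_one {v w : F} (hv : v ^ 2 = -1) (hw : w ^ 4 = 1) :
    ∃ k : ℕ, w = v ^ k := by
  have : (w - 1) * (w + 1) * (w - v) * (w + v) = 0 := by
    linear_combination hw + (1 - w ^ 2) * hv
  rcases mul_eq_zero.mp this with h | h
  · rcases mul_eq_zero.mp h with h | h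
    · rcases mul_eq_zero.mp h with h | h
      · exact ⟨0, by linear_combination h⟩
      · exact ⟨2, by linear_combination h - hv⟩
    · exact ⟨1, by linear_combination h⟩
  · exact ⟨3, by linear_combination h - v * hv⟩

namespace rootsOfUnity

theorem le_ker_sq_or_eq_top (V : Subgroup (rootsOfUnity 4 F)) :
    V ≤ (powMonoidHom 2).ker ∨ V = ⊤ := by
  refine or_iff_not_imp_left.mpr fun hV => eq_top_iff.mpr fun w _ => ?_
  obtain ⟨v, hvV, hv⟩ := SetLike.not_le_iff_exists.mp hV
  have hv2 : ((v : Fˣ) : F) ^ 2 = -1 := by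
    have hv1 : ((v : Fˣ) : F) ^ 2 ≠ 1 := fun h =>
      hv (MonoidHom.mem_ker.mpr (coe_injective (by simpa using h)))
    have : (((v : Fˣ) : F) ^ 2 - 1) * (((v : Fˣ) : F) ^ 2 + 1) = 0 := by
      linear_combination (mem_rootsOfUnity' 4 _).mp v.2
    exact eq_neg_of_add_eq_zero_left ((mul_eq_zero.mp this).resolve_left (sub_ne_zero.mpr hv1))
  obtain ⟨k, hk⟩ := exists_eq_pow_of_pow_four_eq_one hv2 ((mem_rootsOfUnity' 4 _).mp w.2)
  have hwv : w = v ^ k := coe_injective (by simpa using hk)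
  exact hwv ▸ pow_mem hvV k

theorem eq_bot_or_eq_ker_sq_of_le {V : Subgroup (rootsOfUnity 4 F)}
    (hV : V ≤ (powMonoidHom 2).ker) : V = ⊥ ∨ V = (powMonoidHom 2).ker := by
  refine or_iff_not_imp_left.mpr fun hV₀ => le_antisymm hV fun w hw => ?_
  have eq_one_or_eq_neg_one (x : rootsOfUnity 4 F) (hx : x ∈ (powMonoidHom 2).ker) :
      x = 1 ∨ ((x : Fˣ) : F) = -1 := by
    have : ((x : Fˣ) : F) ^ 2 = 1 := by
      simpa using congrArg (fun y : rootsOfUnity 4 F => ((y : Fˣ) : F)) (MonoidHom.mem_ker.mp hx)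
    exact (sq_eq_one_iff.mp this).imp_left fun h => coe_injective (by simpa using h)
  obtain ⟨⟨v, hvV⟩, hv⟩ := ne_bot_iff_exists_ne_one.mp hV₀
  have hv' : ((v : Fˣ) : F) = -1 :=
    (eq_one_or_eq_neg_one v (hV hvV)).resolve_left fun h => hv (Subtype.ext h)
  rcases eq_one_or_eq_neg_one w hw with rfl | hw'
  · exact one_mem V
  · exact coe_injective (hw'.trans hv'.symm) ▸ hvV

theorem eq_bot_or_eq_ker_sq_or_eq_top (V : Subgroup (rootsOfUnity 4 F)) :
    V = ⊥ ∨ V = (powMonoidHom 2).ker ∨ V = ⊤ :=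
  (le_ker_sq_or_eq_top V).elim (fun h => (eq_bot_or_eq_ker_sq_of_le h).imp_right .inl)
    (.inr ∘ .inr)

theorem isCoatom_ker_sq {ω : rootsOfUnity 4 F} (hω : ω ^ 2 ≠ 1) :
    IsCoatom (powMonoidHom 2 : rootsOfUnity 4 F →* _).ker :=
  ⟨fun h => hω (by rw [← powMonoidHom_apply, ← MonoidHom.mem_ker, h]; exact mem_top ω),
    fun V hV => (le_ker_sq_or_eq_top V).resolve_left hV.not_ge⟩

end rootsOfUnity

end

theorem exists_rootsOfUnity_four_sq_ne_one {p : ℕ} [Fact p.Prime] (hp : p % 4 = 1) :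
    ∃ ω : rootsOfUnity 4 (ZMod p), ω ^ 2 ≠ 1 := by
  obtain ⟨z, hz⟩ := ZMod.exists_sq_eq_neg_one_iff.mpr (show p % 4 ≠ 3 by omega)
  have hz0 : z ≠ 0 := by rintro rfl; simp at hz
  have : Fact (2 < p) := ⟨by have := (Fact.out : p.Prime).two_le; omega⟩
  refine ⟨⟨Units.mk0 z hz0, (mem_rootsOfUnity' 4 _).mpr ?_⟩, fun h => ?_⟩
  · simp [show z ^ 4 = (z * z) ^ 2 by ring, ← hz]
  · have := congrArg (fun y : rootsOfUnity 4 (ZMod p) => ((y : (ZMod p)ˣ) : ZMod p)) h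
    simp [sq, ← hz] at this
    exact ZMod.neg_one_ne_one this

@[ext]
structure AffineGroup (A U : Type*) where
  trans : A
  lin : U

namespace AffineGroup

section General

variable {A U : Type*} [AddGroup A] [Group U]

instance : One (AffineGroup A U) := ⟨⟨0, 1⟩⟩

@[simp] theorem trans_one : (1 : AffineGroup A U).trans = 0 := rfl
@[simp] theorem lin_one : (1 : AffineGroup A U).lin = 1 := rfl

variable [DistribMulAction U A]

instance : Mul (AffineGroup A U) := ⟨fun g h => ⟨g.trans + g.lin • h.trans, g.lin * h.lin⟩⟩

instance : Inv (AffineGroup A U) := ⟨fun g => ⟨-(g.lin⁻¹ • g.trans), g.lin⁻¹⟩⟩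

@[simp] theorem trans_mul (g h : AffineGroup A U) : (g * h).trans = g.trans + g.lin • h.trans := rfl
@[simp] theorem lin_mul (g h : AffineGroup A U) : (g * h).lin = g.lin * h.lin := rfl
@[simp] theorem trans_inv (g : AffineGroup A U) : g⁻¹.trans = -(g.lin⁻¹ • g.trans) := rfl
@[simp] theorem lin_inv (g : AffineGroup A U) : g⁻¹.lin = g.lin⁻¹ := rfl

instance : Group (AffineGroup A U) where
  mul_assoc g h k := by ext <;> simp [smul_add, mul_smul, add_assoc, mul_assoc]
  one_mul g := by ext <;> simp
  mul_one g := by ext <;> simp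
  inv_mul_cancel g := by ext <;> simp

instance [Finite A] [Finite U] : Finite (AffineGroup A U) :=
  Finite.of_injective (fun g => (g.trans, g.lin)) fun g h hgh => by
    ext
    exacts [congrArg Prod.fst hgh, congrArg Prod.snd hgh]

instance : SMul (AffineGroup A U) A := ⟨fun g a => g.trans + g.lin • a⟩

theorem smul_def (g : AffineGroup A U) (a : A) : g • a = g.trans + g.lin • a := rfl

instance : MulAction (AffineGroup A U) A where
  one_smul a := by simp [smul_def]
  mul_smul g h a := by simp [smul_def, smul_add, mul_smul, add_assoc]

instance : IsPretransitive (AffineGroup A U) A :=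
  ⟨fun a b => ⟨⟨b - a, 1⟩, by simp [smul_def]⟩⟩

def linHom : AffineGroup A U →* U where
  toFun := lin
  map_one' := rfl
  map_mul' _ _ := rfl

theorem linHom_surjective : Function.Surjective (linHom : AffineGroup A U →* U) :=
  fun u => ⟨⟨0, u⟩, rfl⟩

def translations : Subgroup (AffineGroup A U) := linHom.ker

theorem mem_translations {g : AffineGroup A U} : g ∈ translations ↔ g.lin = 1 := Iff.rfl

theorem mk_one_pow (b : A) (n : ℕ) : (⟨b, 1⟩ : AffineGroup A U) ^ n = ⟨n • b, 1⟩ := by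
  induction n with
  | zero => ext <;> simp
  | succ n ih => ext <;> simp [pow_succ, ih, succ_nsmul]

theorem stabilizer_inf_translations (a : A) :
    stabilizer (AffineGroup A U) a ⊓ translations = ⊥ := by
  refine eq_bot_iff.mpr fun g hg => ?_
  obtain ⟨hga, hg⟩ := mem_inf.mp hg
  rw [mem_stabilizer_iff, smul_def, mem_translations.mp hg, one_smul, add_eq_right] at hga
  exact mem_bot.mpr (AffineGroup.ext hga hg)

theorem isCoatom_stabilizer (hA : (Nat.card A).Prime) (a : A) :
    IsCoatom (stabilizer (AffineGroup A U) a) :=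
  have : Finite A := Nat.finite_of_card_ne_zero hA.ne_zero
  have : Nontrivial A := Finite.one_lt_card_iff_nontrivial.mp hA.one_lt
  (isCoatom_stabilizer_iff_preprimitive _ a).mpr (.of_prime_card hA)

end General

section Field

variable {F : Type*} [Field F] {U : Subgroup Fˣ}

theorem smul_eq_add_mul (g : AffineGroup F U) (a : F) :
    g • a = g.trans + ((g.lin : Fˣ) : F) * a :=
  rfl

theorem stabilizer_inf_stabilizer_eq_bot {a b : F} (hab : a ≠ b) :
    stabilizer (AffineGroup F U) a ⊓ stabilizer (AffineGroup F U) b = ⊥ := by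
  refine eq_bot_iff.mpr fun g hg => ?_
  obtain ⟨ha, hb⟩ := mem_inf.mp hg
  rw [mem_stabilizer_iff, smul_eq_add_mul] at ha hb
  have hlin : ((g.lin : Fˣ) : F) = 1 := by
    have : ((g.lin : Fˣ) - 1 : F) * (a - b) = 0 := by linear_combination ha - hb
    simpa [sub_eq_zero, hab] using this
  rw [hlin, one_mul, add_eq_right] at ha
  exact mem_bot.mpr (AffineGroup.ext ha (by simpa using hlin))

theorem exists_smul_eq_self {g : AffineGroup F U} (hg : g.lin ≠ 1) : ∃ a : F, g • a = a := by
  have hu : (1 - ((g.lin : Fˣ) : F)) ≠ 0 := sub_ne_zero.mpr fun h => hg (by simpa using h.symm)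
  refine ⟨g.trans / (1 - ((g.lin : Fˣ) : F)), ?_⟩
  rw [smul_eq_add_mul]
  field_simp
  ring

theorem eq_of_smul_eq_self {g : AffineGroup F U} (hg : g.lin ≠ 1) {a b : F} (ha : g • a = a)
    (hb : g • b = b) : a = b := by
  by_contra hab
  have := stabilizer_inf_stabilizer_eq_bot hab ▸
    mem_inf.mpr ⟨mem_stabilizer_iff.mpr ha, mem_stabilizer_iff.mpr hb⟩
  exact hg (congrArg lin (mem_bot.mp this))

theorem exists_le_stabilizer {K : Subgroup (AffineGroup F U)} (hK : K ⊓ translations = ⊥) :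
    ∃ a : F, K ≤ stabilizer (AffineGroup F U) a := by
  rcases eq_or_ne K ⊥ with rfl | hK₀
  · exact ⟨0, bot_le⟩
  have eq_one : ∀ h ∈ K, h.lin = 1 → h = 1 := fun h hK' hT =>
    mem_bot.mp (hK ▸ mem_inf.mpr ⟨hK', mem_translations.mpr hT⟩)
  obtain ⟨⟨g, hgK⟩, hg⟩ := ne_bot_iff_exists_ne_one.mp hK₀
  have hglin : g.lin ≠ 1 := fun h => hg (Subtype.ext (eq_one g hgK h))
  obtain ⟨a, ha⟩ := exists_smul_eq_self hglin
  refine ⟨a, fun h hh => ?_⟩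
  have hcomm : h * g = g * h := mul_inv_eq_one.mp <| eq_one _
    (mul_mem (mul_mem hh hgK) (inv_mem (mul_mem hgK hh))) (mul_inv_eq_one.mpr (mul_comm _ _))
  have hha : g • h • a = h • a := by rw [smul_smul, ← hcomm, mul_smul, ha]
  exact mem_stabilizer_iff.mpr (eq_of_smul_eq_self hglin hha ha)

theorem stabilizer_injective {u : U} (hu : u ≠ 1) :
    Function.Injective (stabilizer (AffineGroup F U) : F → _) := by
  intro a b hab
  by_contra hne
  have hmem : (⟨a - ((u : Fˣ) : F) * a, u⟩ : AffineGroup F U) ∈ stabilizer (AffineGroup F U) a := by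
    simp [mem_stabilizer_iff, smul_eq_add_mul]
  have := stabilizer_inf_stabilizer_eq_bot hne ▸ mem_inf.mpr ⟨hmem, hab ▸ hmem⟩
  exact hu (congrArg lin (mem_bot.mp this))

end Field

section PrimeField

variable {p : ℕ} [Fact p.Prime] {U : Subgroup (ZMod p)ˣ}

theorem translations_le_or_inf_translations_eq_bot (K : Subgroup (AffineGroup (ZMod p) U)) :
    translations ≤ K ∨ K ⊓ translations = ⊥ := by
  refine or_iff_not_imp_right.mpr fun hK h hh => ?_
  obtain ⟨⟨⟨b, u⟩, hg⟩, hg1⟩ := ne_bot_iff_exists_ne_one.mp hK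
  obtain ⟨hgK, rfl : u = 1⟩ := mem_inf.mp hg
  have hb : b ≠ 0 := by rintro rfl; exact hg1 rfl
  -- `ZMod p` is generated by any nonzero element
  have : h = ⟨b, 1⟩ ^ (h.trans / b).val := by
    rw [mk_one_pow, nsmul_eq_mul, ZMod.natCast_zmod_val, div_mul_cancel₀ _ hb]
    exact AffineGroup.ext rfl hh
  exact this ▸ pow_mem hgK _

theorem exists_eq_comap_or_eq_stabilizer_inf_comap (K : Subgroup (AffineGroup (ZMod p) U)) :
    ∃ V : Subgroup U, K = V.comap linHom ∨
      ∃ a : ZMod p, K = stabilizer (AffineGroup (ZMod p) U) a ⊓ V.comap linHom := by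
  refine ⟨K.map linHom, ?_⟩
  rcases translations_le_or_inf_translations_eq_bot K with hK | hK
  · exact .inl (comap_map_eq_self hK).symm
  · obtain ⟨a, ha⟩ := exists_le_stabilizer hK
    exact .inr ⟨a, eq_inf_comap_map linHom ha ((stabilizer_inf_translations a).le.trans bot_le)⟩

end PrimeField

section Dihedral

variable {F : Type*} [Field F] {ω : rootsOfUnity 4 F}

variable (F) in
def dihedral : Subgroup (AffineGroup F (rootsOfUnity 4 F)) := (powMonoidHom 2).ker.comap linHom

theorem isCoatom_dihedral (hω : ω ^ 2 ≠ 1) : IsCoatom (dihedral F) :=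
  isCoatom_comap_of_surjective linHom_surjective (rootsOfUnity.isCoatom_ker_sq hω)

theorem translations_lt_dihedral (hω : ω ^ 2 ≠ 1) : translations < dihedral F := by
  rw [translations, ← MonoidHom.comap_bot, dihedral]
  refine lt_of_le_of_ne (comap_mono bot_le) fun h => hω ?_
  have hω2 : ω ^ 2 ∈ (powMonoidHom 2 : rootsOfUnity 4 F →* _).ker := by
    rw [MonoidHom.mem_ker, powMonoidHom_apply, ← pow_mul]
    exact rootsOfUnity.coe_injective (by simpa using (mem_rootsOfUnity' 4 _).mp ω.2)
  rwa [← comap_injective linHom_surjective h, mem_bot] at hω2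

theorem not_isIMS_translations (hω : ω ^ 2 ≠ 1) :
    ¬ IsIMS (translations : Subgroup (AffineGroup F (rootsOfUnity 4 F))) := by
  refine not_isIMS_of_lt (translations_lt_dihedral hω) fun M hM hTM => ?_
  have hMD : M ≤ dihedral F := by
    rw [← comap_map_eq_self hTM]
    refine comap_mono ((rootsOfUnity.le_ker_sq_or_eq_top _).resolve_right fun h => hM.1 ?_)
    rw [← comap_map_eq_self hTM, h, comap_top]
  exact ((hM.le_iff.mp hMD).resolve_left (isCoatom_dihedral hω).1).le

end Dihedral

theorem isIMS_of_ne_top_of_ne_translations {p : ℕ} [Fact p.Prime] {ω : rootsOfUnity 4 (ZMod p)}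
    (hω : ω ^ 2 ≠ 1) {K : Subgroup (AffineGroup (ZMod p) (rootsOfUnity 4 (ZMod p)))}
    (hK : K ≠ ⊤) (hKT : K ≠ translations) : IsIMS K := by
  have hS (a : ZMod p) : IsCoatom (stabilizer (AffineGroup (ZMod p) (rootsOfUnity 4 (ZMod p))) a) :=
    isCoatom_stabilizer (by rw [Nat.card_zmod]; exact Fact.out) a
  obtain ⟨V, rfl | ⟨a, rfl⟩⟩ := exists_eq_comap_or_eq_stabilizer_inf_comap K <;>
    rcases rootsOfUnity.eq_bot_or_eq_ker_sq_or_eq_top V with rfl | rfl | rfl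
  · exact absurd (MonoidHom.comap_bot _) hKT
  · exact isIMS_of_isCoatom (isCoatom_dihedral hω)
  · exact absurd (comap_top _) hK
  · rw [MonoidHom.comap_bot, ← translations, stabilizer_inf_translations,
      ← stabilizer_inf_stabilizer_eq_bot zero_ne_one]
    exact isIMS_inf (hS 0) (hS 1)
  · exact isIMS_inf (hS a) (isCoatom_dihedral hω)
  · rw [comap_top, inf_top_eq]
    exact isIMS_of_isCoatom (hS a)

end AffineGroup

open AffineGroup in
theorem exists_group_with_unique_non_IMS_subgroup_general (n : ℕ) :
    ∃ (G : Type) (_ : Group G) (_ : Finite G),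
      n ≤ Nat.card (Subgroup G) ∧ ∃! K : Subgroup G, K ≠ ⊤ ∧ ¬ IsIMS K := by
  obtain ⟨p, hp, hnp, hp4⟩ := Nat.exists_prime_gt_modEq_one n four_ne_zero
  have := Fact.mk hp
  obtain ⟨ω, hω⟩ := exists_rootsOfUnity_four_sq_ne_one hp4
  have hω1 : ω ≠ 1 := by rintro rfl; exact hω (one_pow 2)
  refine ⟨AffineGroup (ZMod p) (rootsOfUnity 4 (ZMod p)), inferInstance, inferInstance, ?_,
    translations, ⟨((translations_lt_dihedral hω).trans_le le_top).ne, not_isIMS_translations hω⟩,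
    fun K hK => not_not.mp fun hKT => hK.2 (isIMS_of_ne_top_of_ne_translations hω hK.1 hKT)⟩
  calc n ≤ Nat.card (ZMod p) := by rw [Nat.card_zmod]; exact hnp.le
    _ ≤ _ := Nat.card_le_card_of_injective _ (stabilizer_injective hω1)

theorem exists_group_with_unique_non_IMS_subgroup (n : ℕ) (hn : 0 < n) :
    ∃ (G : Type) (_ : Group G) (_ : Finite G),
      n ≤ Nat.card (Subgroup G) ∧ ∃! K : Subgroup G, K ≠ ⊤ ∧ ¬ IsIMS K :=
  exists_group_with_unique_non_IMS_subgroup_general n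
end

section
/- Let G be a finite group with a normal abelian subgroup F complemented by an abelian subgroup H of coprime order, with F a direct product of G-minimal subgroups of pairwise distinct prime orders. Then a subgroup X of G is normal if and only if for every minimal normal subgroup component W_i of F, whenever X does not centralize the corresponding module V_i, one has W_i ≤ X. -/
section Aux

variable {G : Type*} [Group G]

private lemma normal_iSup_aux {ι : Sort*} (f : ι → Subgroup G)
    (h : ∀ i, (f i).Normal) : (⨆ i, f i).Normal := by
  constructor
  intro n hn g
  refine Subgroup.iSup_induction f (C := fun m => g * m * g⁻¹ ∈ ⨆ i, f i) hn
    (fun i x hx => Subgroup.mem_iSup_of_mem i ((h i).conj_mem x hx g)) ?_ ?_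
  · simpa using Subgroup.one_mem (⨆ i, f i)
  · intro x y hx hy
    have hxy : g * (x * y) * g⁻¹ = g * x * g⁻¹ * (g * y * g⁻¹) := by group
    rw [hxy]; exact mul_mem hx hy

private lemma mem_zpowers_mul_of_coprime {a y : G}
    (h : Commute a y) (hc : Nat.Coprime (orderOf a) (orderOf y)) :
    a ∈ Subgroup.zpowers (a * y) := by
  obtain ⟨k, hk1, hk0⟩ := Nat.chineseRemainder hc 1 0
  refine Subgroup.mem_zpowers_iff.mpr ⟨(k : ℤ), ?_⟩
  rw [zpow_natCast, h.mul_pow]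
  have hy : y ^ k = 1 :=
    orderOf_dvd_iff_pow_eq_one.mp (Nat.modEq_zero_iff_dvd.mp hk0)
  have ha : a ^ k = a := by
    conv_rhs => rw [← pow_one a]
    exact pow_eq_pow_iff_modEq.mpr hk1
  rw [hy, ha, mul_one]

end Aux

open scoped Pointwise
open scoped commutatorElement



theorem normal_iff_contains_noncentralized_components
    {G : Type*} [Group G] [Finite G] {F H : Subgroup G}
    (hFn : F.Normal) (hFab : IsMulCommutative ↥F) (hHab : IsMulCommutative ↥H)
    (hcomp : F.IsComplement' H)
    (hcop : Nat.Coprime (Nat.card ↥F) (Nat.card ↥H))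
    {r : ℕ} (W : Fin r → Subgroup G) (p : Fin r → ℕ)
    (hp : ∀ i, (p i).Prime) (hinj : Function.Injective p)
    (hcard : ∀ i, Nat.card ↥(W i) = p i)
    (hmin : ∀ i, IsMinimalNormal (W i))
    (hind : iSupIndep W) (hsup : (⨆ i, W i) = F)
    (X : Subgroup G) :
    X.Normal ↔ ∀ i, ¬ W i ≤ Subgroup.centralizer (X : Set G) → W i ≤ X := by
  classical
  haveI := hFab
  haveI := hHab
  have hWF : ∀ j, W j ≤ F := fun j => hsup ▸ le_iSup W j
  have hWn : ∀ j, (W j).Normal := fun j => (hmin j).2.1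
  have hcomm : Pairwise fun i j : Fin r => ∀ x y : G, x ∈ W i → y ∈ W j → Commute x y := by
    intro i j _ x y hx hy
    exact Subgroup.mul_comm_of_mem_isMulCommutative (H := F) (hWF i hx) (hWF j hy)
  set N : Fin r → Subgroup G := fun j => ⨆ k : {k : Fin r // k ≠ j}, W k with hN
  have hWN : ∀ {j k : Fin r}, k ≠ j → W k ≤ N j := fun {j k} hk => le_iSup_of_le ⟨k, hk⟩ le_rfl
  have hNF : ∀ j, N j ≤ F := fun j => iSup_le fun k => hWF k
  have hNn : ∀ j, (N j).Normal := fun j => normal_iSup_aux _ fun k => hWn k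
  have hNeq : ∀ j, N j = ⨆ k, ⨆ (_ : k ≠ j), W k := fun j => iSup_subtype
  have hdisjoint : ∀ j, ∀ a ∈ W j, a ∈ N j → a = 1 := by
    intro j a ha haN
    have hd : Disjoint (W j) (N j) := by rw [hNeq j]; exact hind j
    have : a ∈ (⊥ : Subgroup G) := hd.le_bot (Subgroup.mem_inf.mpr ⟨ha, haN⟩)
    simpa [Subgroup.mem_bot] using this
  set φ := Subgroup.noncommPiCoprod hcomm with hφ
  have hφapply : ∀ u : (i : Fin r) → W i, φ u = Finset.univ.noncommProd (fun i => (u i : G))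
      (fun i _ j _ h => hcomm h _ _ (u i).2 (u j).2) :=
    fun u => Subgroup.noncommPiCoprod_apply hcomm u
  have hφrange : ∀ f ∈ F, ∃ u, φ u = f := by
    intro f hf
    have : f ∈ φ.range := by
      rw [hφ, Subgroup.noncommPiCoprod_range, hsup]
      exact hf
    exact this
  have hφsplit : ∀ (u : (k : Fin r) → W k) (j : Fin r), ∃ b ∈ N j, φ u = (u j : G) * b := by
    intro u j
    refine ⟨(Finset.univ.erase j).noncommProd (fun k => (u k : G))
        (fun k hk l hl hkl => hcomm hkl _ _ (u k).2 (u l).2), ?_, ?_⟩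
    · exact Subgroup.noncommProd_mem _ _ (fun k hk => hWN (Finset.ne_of_mem_erase hk) (u k).2)
    · exact (hφapply u).trans
        (Finset.mul_noncommProd_erase Finset.univ (Finset.mem_univ j) _ _).symm
  have hdecomp : ∀ (j : Fin r), ∀ f ∈ F, ∃ a ∈ W j, ∃ b ∈ N j, f = a * b := by
    intro j f hf
    obtain ⟨u, hu⟩ := hφrange f hf
    obtain ⟨b, hb, he⟩ := hφsplit u j
    exact ⟨u j, (u j).2, b, hb, by rw [← hu, he]⟩
  have hcardN : ∀ j, ¬ p j ∣ Nat.card (N j) := by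
    intro j hdvd
    have hsub : iSupIndep fun k : {k : Fin r // k ≠ j} => W k :=
      hind.comp Subtype.val_injective
    have hcomm' : Pairwise fun k l : {k : Fin r // k ≠ j} =>
        ∀ x y : G, x ∈ W k → y ∈ W l → Commute x y :=
      fun k l hkl => hcomm (fun h => hkl (Subtype.ext h))
    have hinj' := Subgroup.injective_noncommPiCoprod_of_iSupIndep (hcomm := hcomm') hsub
    have hrange : (Subgroup.noncommPiCoprod hcomm').range = N j :=
      Subgroup.noncommPiCoprod_range
    have hcards : Nat.card (N j) = ∏ k : {k : Fin r // k ≠ j}, p k := by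
      rw [← hrange, ← Nat.card_congr (MonoidHom.ofInjective hinj').toEquiv, Nat.card_pi]
      exact Finset.prod_congr rfl fun k _ => hcard k
    rw [hcards] at hdvd
    obtain ⟨k, _, hk⟩ := ((hp j).prime.dvd_finset_prod_iff _).mp hdvd
    have : p j = p k := (Nat.prime_dvd_prime_iff_eq (hp j) (hp k)).mp hk
    exact k.2 (hinj this).symm
  have hpF : ∀ j, p j ∣ Nat.card F := fun j => (hcard j) ▸ Subgroup.card_dvd_of_le (hWF j)
  have hpH : ∀ j, ¬ p j ∣ Nat.card H := by
    intro j hdvd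
    have : p j = 1 := (Nat.Coprime.coprime_dvd_left (hpF j) hcop).eq_one_of_dvd hdvd
    exact (hp j).one_lt.ne' this
  have hcardK : ∀ j, ¬ p j ∣ Nat.card ↥(N j ⊔ H) := by
    intro j
    haveI := hNn j
    have hNK : N j ≤ N j ⊔ H := le_sup_left
    have hq : Nat.card ↥(N j ⊔ H) =
        Nat.card (↥(N j ⊔ H) ⧸ (N j).subgroupOf (N j ⊔ H)) *
          Nat.card ((N j).subgroupOf (N j ⊔ H)) :=
      Subgroup.card_eq_card_quotient_mul_card_subgroup _
    have hcsub : Nat.card ((N j).subgroupOf (N j ⊔ H)) = Nat.card (N j) :=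
      Nat.card_congr (Subgroup.subgroupOfEquivOfLe hNK).toEquiv
    have hsurj : Function.Surjective ((QuotientGroup.mk' ((N j).subgroupOf (N j ⊔ H))).comp
        (Subgroup.inclusion (le_sup_right : H ≤ N j ⊔ H))) := by
      intro q
      obtain ⟨k, rfl⟩ := QuotientGroup.mk'_surjective _ q
      have hk : (k : G) ∈ ((N j : Set G) * (H : Set G)) := by
        rw [← Subgroup.normal_mul]; exact k.2
      obtain ⟨n, hn, h, hh, he⟩ := hk
      refine ⟨⟨h, hh⟩, ?_⟩
      simp only [MonoidHom.comp_apply, QuotientGroup.mk'_apply]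
      rw [QuotientGroup.eq, Subgroup.mem_subgroupOf]
      push_cast [Subgroup.coe_inclusion]
      rw [← he]
      have hval : h⁻¹ * (n * h) = h⁻¹ * n * (h⁻¹)⁻¹ := by group
      rw [hval]
      exact (hNn j).conj_mem n hn h⁻¹
    have hqd : Nat.card (↥(N j ⊔ H) ⧸ (N j).subgroupOf (N j ⊔ H)) ∣ Nat.card H :=
      Subgroup.card_dvd_of_surjective _ hsurj
    intro hdvd
    rw [hq] at hdvd
    rcases (hp j).dvd_mul.mp hdvd with h1 | h2
    · exact hpH j (h1.trans hqd)
    · rw [hcsub] at h2; exact hcardN j h2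
  have hFH : ∀ z : G, ∃ f ∈ F, ∃ h ∈ H, z = f * h := by
    intro z
    obtain ⟨⟨f, h⟩, hfh, -⟩ := hcomp.existsUnique z
    exact ⟨f, f.2, h, h.2, hfh.symm⟩
  have hassemble : ∀ c ∈ F, (∀ j, ¬ W j ≤ X → c ∈ N j) → c ∈ X := by
    intro c hc hcj
    obtain ⟨u, hu⟩ := hφrange c hc
    rw [← hu, hφapply u]
    refine Subgroup.noncommProd_mem X _ (fun j _ => ?_)
    by_cases hj : W j ≤ X
    · exact hj (u j).2
    · obtain ⟨b, hb, he⟩ := hφsplit u j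
      have hcN : c ∈ N j := hcj j hj
      have huj : (u j : G) ∈ N j := by
        have heq : (u j : G) = c * b⁻¹ := by rw [← hu, he]; group
        rw [heq]; exact mul_mem hcN (inv_mem hb)
      have h1 : (u j : G) = 1 := hdisjoint j _ (u j).2 huj
      rw [h1]; exact one_mem X
  constructor
  · intro hXn i hni
    haveI := hXn
    haveI := hWn i
    have hne : (⁅W i, X⁆ : Subgroup G) ≠ ⊥ := by
      intro hbot
      apply hni
      intro w hw
      rw [Subgroup.mem_centralizer_iff]
      intro m hm
      have hc : ⁅w, m⁆ ∈ (⁅W i, X⁆ : Subgroup G) := Subgroup.commutator_mem_commutator hw hm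
      rw [hbot, Subgroup.mem_bot, commutatorElement_eq_one_iff_commute] at hc
      exact hc.symm.eq
    have heq := (hmin i).2.2 ⁅W i, X⁆ inferInstance (Subgroup.commutator_le_left _ _) hne
    rw [← heq]
    exact Subgroup.commutator_le_right _ _
  · intro hyp
    have key : ∀ i, ¬ W i ≤ X → ∀ x ∈ X, ∀ g : G, g * x * g⁻¹ * x⁻¹ ∈ N i := by
      intro i hXi x hx g
      have hC : W i ≤ Subgroup.centralizer (X : Set G) := by
        by_contra hcc
        exact hXi (hyp i hcc)
      haveI := hNn i
      obtain ⟨f, hf, h, hh, hxfh⟩ := hFH x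
      obtain ⟨a, haW, b, hbN, hfab⟩ := hdecomp i f hf
      have hWh : ∀ w ∈ W i, w * h = h * w := by
        intro w hw
        have h1 : x * w = w * x := Subgroup.mem_centralizer_iff.mp (hC hw) x hx
        have h2 : w * f = f * w :=
          Subgroup.mul_comm_of_mem_isMulCommutative (H := F) (hWF i hw) hf
        have h3 : f * (h * w) = f * (w * h) := by
          calc f * (h * w) = (f * h) * w := by group
          _ = w * (f * h) := by rw [← hxfh]; exact h1
          _ = (w * f) * h := by group
          _ = (f * w) * h := by rw [h2]
          _ = f * (w * h) := by group
        exact (mul_left_cancel h3).symm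
      have haone : a = 1 := by
        by_contra ha1
        have habK : b * h ∈ (N i ⊔ H : Subgroup G) :=
          mul_mem (Subgroup.mem_sup_left hbN) (Subgroup.mem_sup_right hh)
        have hcomm_ab : Commute a (b * h) := by
          have c1 : a * b = b * a :=
            Subgroup.mul_comm_of_mem_isMulCommutative (H := F) (hWF i haW) (hNF i hbN)
          have c2 : a * h = h * a := hWh a haW
          show a * (b * h) = (b * h) * a
          calc a * (b * h) = (a * b) * h := by group
          _ = (b * a) * h := by rw [c1]
          _ = b * (a * h) := by group
          _ = b * (h * a) := by rw [c2]
          _ = (b * h) * a := by group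
        have hxeq2 : x = a * (b * h) := by rw [hxfh, hfab]; group
        have hord_a : orderOf a ∣ p i := by
          rw [← hcard i]; exact Subgroup.orderOf_dvd_natCard (W i) haW
        have hord_y : orderOf (b * h) ∣ Nat.card ↥(N i ⊔ H) :=
          Subgroup.orderOf_dvd_natCard _ habK
        have hcop2 : Nat.Coprime (orderOf a) (orderOf (b * h)) := by
          rcases (Nat.dvd_prime (hp i)).mp hord_a with h1 | h1
          · rw [h1]; exact Nat.coprime_one_left _
          · rw [h1]
            exact ((hp i).coprime_iff_not_dvd).mpr (fun hd => hcardK i (hd.trans hord_y))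
        have haX : a ∈ X := by
          have hmem := mem_zpowers_mul_of_coprime hcomm_ab hcop2
          rw [← hxeq2] at hmem
          exact (Subgroup.zpowers_le.mpr hx) hmem
        apply hXi
        have horda : orderOf a = p i := by
          rcases (Nat.dvd_prime (hp i)).mp hord_a with h1 | h1
          · exact absurd (orderOf_eq_one_iff.mp h1) ha1
          · exact h1
        have hzeq : Subgroup.zpowers a = W i := by
          apply Subgroup.eq_of_le_of_card_ge (Subgroup.zpowers_le.mpr haW)
          exact le_of_eq (by rw [hcard i, Nat.card_zpowers, horda])
        rw [← hzeq]
        exact Subgroup.zpowers_le.mpr haX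
      have hfN : f ∈ N i := by rw [hfab, haone, one_mul]; exact hbN
      rw [← QuotientGroup.eq_one_iff]
      obtain ⟨f₀, hf₀, h₀, hh₀, hgeq⟩ := hFH g
      obtain ⟨a₀, ha₀, b₀, hb₀, hf₀ab⟩ := hdecomp i f₀ hf₀
      have hxq : ((x : G) : G ⧸ N i) = ((h : G) : G ⧸ N i) := by
        rw [QuotientGroup.eq, hxfh]
        have he : (f * h)⁻¹ * h = h⁻¹ * f⁻¹ * h := by group
        rw [he]
        simpa using (hNn i).conj_mem f⁻¹ (inv_mem hfN) h⁻¹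
      have hgq : ((g : G) : G ⧸ N i) = ((a₀ * h₀ : G) : G ⧸ N i) := by
        rw [QuotientGroup.eq, hgeq, hf₀ab]
        have he : (a₀ * b₀ * h₀)⁻¹ * (a₀ * h₀) = h₀⁻¹ * b₀⁻¹ * h₀ := by group
        rw [he]
        simpa using (hNn i).conj_mem b₀⁻¹ (inv_mem hb₀) h₀⁻¹
      have hGcomm : (a₀ * h₀) * h = h * (a₀ * h₀) := by
        have c1 : a₀ * h = h * a₀ := hWh a₀ ha₀
        have c2 : h₀ * h = h * h₀ :=
          Subgroup.mul_comm_of_mem_isMulCommutative (H := H) hh₀ hh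
        calc a₀ * h₀ * h = a₀ * (h₀ * h) := by group
        _ = a₀ * (h * h₀) := by rw [c2]
        _ = (a₀ * h) * h₀ := by group
        _ = (h * a₀) * h₀ := by rw [c1]
        _ = h * (a₀ * h₀) := by group
      have hcq : ((g : G) : G ⧸ N i) * ((x : G) : G ⧸ N i)
          = ((x : G) : G ⧸ N i) * ((g : G) : G ⧸ N i) := by
        rw [hxq, hgq, ← QuotientGroup.mk_mul, ← QuotientGroup.mk_mul, hGcomm]
      calc ((g * x * g⁻¹ * x⁻¹ : G) : G ⧸ N i)
          = ((g : G) : G ⧸ N i) * ((x : G) : G ⧸ N i) * ((g : G) : G ⧸ N i)⁻¹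
            * ((x : G) : G ⧸ N i)⁻¹ := by
            simp [QuotientGroup.mk_mul, QuotientGroup.mk_inv]
        _ = 1 := by rw [hcq]; group
    constructor
    intro x hx g
    have hcF : g * x * g⁻¹ * x⁻¹ ∈ F := by
      haveI := hFn
      rw [← QuotientGroup.eq_one_iff]
      obtain ⟨f, hf, h, hh, hxfh⟩ := hFH x
      obtain ⟨f₀, hf₀, h₀, hh₀, hgeq⟩ := hFH g
      have hxq : ((x : G) : G ⧸ F) = ((h : G) : G ⧸ F) := by
        rw [QuotientGroup.eq, hxfh]
        have he : (f * h)⁻¹ * h = h⁻¹ * f⁻¹ * h := by group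
        rw [he]
        simpa using hFn.conj_mem f⁻¹ (inv_mem hf) h⁻¹
      have hgq : ((g : G) : G ⧸ F) = ((h₀ : G) : G ⧸ F) := by
        rw [QuotientGroup.eq, hgeq]
        have he : (f₀ * h₀)⁻¹ * h₀ = h₀⁻¹ * f₀⁻¹ * h₀ := by group
        rw [he]
        simpa using hFn.conj_mem f₀⁻¹ (inv_mem hf₀) h₀⁻¹
      have hcomm0 : h₀ * h = h * h₀ :=
        Subgroup.mul_comm_of_mem_isMulCommutative (H := H) hh₀ hh
      have hcq : ((g : G) : G ⧸ F) * ((x : G) : G ⧸ F)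
          = ((x : G) : G ⧸ F) * ((g : G) : G ⧸ F) := by
        rw [hxq, hgq, ← QuotientGroup.mk_mul, ← QuotientGroup.mk_mul, hcomm0]
      calc ((g * x * g⁻¹ * x⁻¹ : G) : G ⧸ F)
          = ((g : G) : G ⧸ F) * ((x : G) : G ⧸ F) * ((g : G) : G ⧸ F)⁻¹
            * ((x : G) : G ⧸ F)⁻¹ := by
            simp [QuotientGroup.mk_mul, QuotientGroup.mk_inv]
        _ = 1 := by rw [hcq]; group
    have hcX : g * x * g⁻¹ * x⁻¹ ∈ X := hassemble _ hcF (fun j hj => key j hj x hx g)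
    have hfin : g * x * g⁻¹ = (g * x * g⁻¹ * x⁻¹) * x := by group
    rw [hfin]
    exact mul_mem hcX hx
end
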